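/- arXiv:1202.0696 — 2 statements merged into one kernel-verified Lean document; each statement's English description precedes it below -/
import Mathlib

section
/- For every sample size n ≥ 1, every σ > 0, every 0 < α < 1, and every μ > μ₀, the power of the one-sided Z test exceeds the power of the two-sided Z test of the same size: Φ((√n/σ)(μ − μ₀) − z_α) > 1 − Φ((√n/σ)(μ − μ₀) + z_{α/2}) + Φ((√n/σ)(μ − μ₀) − z_{α/2}). -/
open Real MeasureTheory Set

/-- Standard normal probability density function. -/
noncomputable def stdPhi (x : ℝ) : ℝ := (Real.sqrt (2 * Real.pi))⁻¹ * Real.exp (-x ^ 2 / 2)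

/-- Standard normal cumulative distribution function. -/
noncomputable def stdPhiCDF (x : ℝ) : ℝ := ∫ t in Set.Iic x, stdPhi t

lemma stdPhi_pos (x : ℝ) : 0 < stdPhi x :=
  mul_pos (inv_pos.2 (Real.sqrt_pos.2 (by positivity))) (Real.exp_pos _)

lemma stdPhi_integrable : Integrable stdPhi := by
  have h : Integrable (fun x : ℝ => Real.exp (-(1/2 : ℝ) * x ^ 2)) :=
    integrable_exp_neg_mul_sq (by norm_num)
  have he : stdPhi = fun x => (Real.sqrt (2 * Real.pi))⁻¹ * Real.exp (-(1/2 : ℝ) * x ^ 2) := by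
    funext x; unfold stdPhi; ring_nf
  rw [he]
  exact h.const_mul _

lemma integral_stdPhi : ∫ x, stdPhi x = 1 := by
  have h : ∫ x : ℝ, Real.exp (-(1/2 : ℝ) * x ^ 2) = Real.sqrt (π / (1/2)) := integral_gaussian (1/2)
  have e : ∫ x, stdPhi x = (Real.sqrt (2 * Real.pi))⁻¹ * ∫ x : ℝ, Real.exp (-(1/2 : ℝ) * x ^ 2) := by
    rw [← integral_const_mul]; congr 1; funext x; unfold stdPhi; ring_nf
  rw [e, h, show π / (1/2) = 2 * π by ring]
  field_simp

lemma stdPhi_neg (x : ℝ) : stdPhi (-x) = stdPhi x := by unfold stdPhi; ring_nf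

lemma stdPhiCDF_neg (x : ℝ) : stdPhiCDF (-x) = 1 - stdPhiCDF x := by
  have h2 : (∫ t in Iic (-x), stdPhi t) = ∫ t in Ioi x, stdPhi t := by
    rw [← integral_comp_neg_Ioi]
    simp_rw [stdPhi_neg]
  have h3 : (∫ t in Iic x, stdPhi t) + (∫ t in Ioi x, stdPhi t) = 1 := by
    rw [intervalIntegral.integral_Iic_add_Ioi stdPhi_integrable.integrableOn
      stdPhi_integrable.integrableOn, integral_stdPhi]
  unfold stdPhiCDF at *; rw [h2]; linarith

lemma stdPhiCDF_mono {a b : ℝ} (h : a ≤ b) : stdPhiCDF a ≤ stdPhiCDF b := by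
  apply setIntegral_mono_set stdPhi_integrable.integrableOn
  · filter_upwards with x using (stdPhi_pos x).le
  · exact HasSubset.Subset.eventuallyLE (Iic_subset_Iic.2 h)

lemma lt_of_stdPhiCDF_lt {a b : ℝ} (h : stdPhiCDF a < stdPhiCDF b) : a < b := by
  by_contra hc
  exact absurd (stdPhiCDF_mono (not_lt.1 hc)) (not_le.2 h)

lemma stdPhiCDF_sub_eq {a b : ℝ} (h : a ≤ b) :
    stdPhiCDF b - stdPhiCDF a = ∫ t in Ioc a b, stdPhi t := by
  unfold stdPhiCDF
  rw [intervalIntegral.integral_Iic_sub_Iic stdPhi_integrable.integrableOn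
    stdPhi_integrable.integrableOn, intervalIntegral.integral_of_le h]

lemma shift_Iic (c δ : ℝ) : (∫ x in Iic c, stdPhi (x - δ)) = stdPhiCDF (c - δ) := by
  have hmp : MeasurePreserving (fun x : ℝ => x + -δ) volume volume :=
    measurePreserving_add_right volume (-δ)
  have hemb : MeasurableEmbedding (fun x : ℝ => x + -δ) :=
    measurableEmbedding_addRight (-δ)
  have h := hmp.setIntegral_preimage_emb hemb stdPhi (Iic (c - δ))
  have hpre : (fun x : ℝ => x + -δ) ⁻¹' Iic (c - δ) = Iic c := by
    ext x; simp [sub_eq_add_neg]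
  rw [hpre] at h
  unfold stdPhiCDF
  rw [← h]
  simp_rw [← sub_eq_add_neg]

lemma shift_Ioc {a b : ℝ} (δ : ℝ) (h : a ≤ b) :
    (∫ x in Ioc a b, stdPhi (x - δ)) = stdPhiCDF (b - δ) - stdPhiCDF (a - δ) := by
  have hint : Integrable (fun x : ℝ => stdPhi (x - δ)) := stdPhi_integrable.comp_sub_right δ
  rw [← shift_Iic a δ, ← shift_Iic b δ,
    intervalIntegral.integral_Iic_sub_Iic hint.integrableOn hint.integrableOn,
    intervalIntegral.integral_of_le h]

lemma stdPhi_shift (x δ : ℝ) : stdPhi (x - δ) = Real.exp (δ * x - δ^2/2) * stdPhi x := by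
  have h : -(x - δ)^2/2 = (δ*x - δ^2/2) + (-x^2/2) := by ring
  unfold stdPhi
  rw [h, Real.exp_add]; ring

lemma key {a' a b δ : ℝ} (ha : a' ≤ a) (hab : a < b) (hδ : 0 < δ)
    (hmass : (∫ x in Iic a', stdPhi x) = ∫ x in Ioc a b, stdPhi x) :
    (∫ x in Iic a', stdPhi (x - δ)) < ∫ x in Ioc a b, stdPhi (x - δ) := by
  set c := Real.exp (δ*a - δ^2/2) with hc
  have hint : Integrable (fun x : ℝ => stdPhi (x - δ)) := stdPhi_integrable.comp_sub_right δ
  have h1 : (∫ x in Iic a', stdPhi (x - δ)) ≤ ∫ x in Iic a', c * stdPhi x := by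
    apply setIntegral_mono_on hint.integrableOn (stdPhi_integrable.const_mul c).integrableOn
      measurableSet_Iic
    intro x hx
    rw [stdPhi_shift]
    apply mul_le_mul_of_nonneg_right _ (stdPhi_pos x).le
    exact Real.exp_le_exp.2 (by nlinarith [mem_Iic.1 hx])
  have h2 : (∫ x in Iic a', c * stdPhi x) = c * ∫ x in Ioc a b, stdPhi x := by
    rw [integral_const_mul, hmass]
  have h3 : (∫ x in Ioc a b, c * stdPhi x) < ∫ x in Ioc a b, stdPhi (x - δ) := by
    have hpos : 0 < ∫ x in Ioc a b, (stdPhi (x - δ) - c * stdPhi x) := by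
      rw [setIntegral_pos_iff_support_of_nonneg_ae]
      · have hsub : Ioc a b ⊆ Function.support (fun x => stdPhi (x - δ) - c * stdPhi x) := by
          intro x hx
          have hgt : c < Real.exp (δ*x - δ^2/2) :=
            Real.exp_lt_exp.2 (by nlinarith [(mem_Ioc.1 hx).1])
          have := stdPhi_pos x
          simp only [Function.mem_support, stdPhi_shift]
          nlinarith
        have hv : (0 : ENNReal) < volume (Ioc a b) := by
          rw [Real.volume_Ioc]
          simp [ENNReal.ofReal_pos, hab]
        exact hv.trans_le (measure_mono (fun x hx => ⟨hsub hx, hx⟩))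
      · filter_upwards [ae_restrict_mem measurableSet_Ioc] with x hx
        have hge : c ≤ Real.exp (δ*x - δ^2/2) :=
          Real.exp_le_exp.2 (by nlinarith [(mem_Ioc.1 hx).1])
        have := stdPhi_pos x
        simp only [Pi.zero_apply, stdPhi_shift]
        nlinarith
      · exact (hint.sub (stdPhi_integrable.const_mul c)).integrableOn
    have hsub := integral_sub hint.integrableOn ((stdPhi_integrable.const_mul c).integrableOn
      (s := Ioc a b))
    rw [hsub] at hpos
    linarith
  calc (∫ x in Iic a', stdPhi (x - δ)) ≤ ∫ x in Iic a', c * stdPhi x := h1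
    _ = ∫ x in Ioc a b, c * stdPhi x := by rw [h2, integral_const_mul]
    _ < _ := h3

theorem one_sided_more_powerful
    (n : ℕ) (hn : 1 ≤ n) (σ : ℝ) (hσ : 0 < σ)
    (α : ℝ) (hα0 : 0 < α) (hα1 : α < 1)
    (zα zα2 : ℝ) (hzα : 1 - stdPhiCDF zα = α) (hzα2 : 1 - stdPhiCDF zα2 = α / 2)
    (μ μ₀ : ℝ) (hμ : μ > μ₀) :
    stdPhiCDF (Real.sqrt n / σ * (μ - μ₀) - zα) >
      1 - stdPhiCDF (Real.sqrt n / σ * (μ - μ₀) + zα2)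
        + stdPhiCDF (Real.sqrt n / σ * (μ - μ₀) - zα2) := by
  set δ := Real.sqrt n / σ * (μ - μ₀) with hδdef
  have hn' : (0:ℝ) < n := by
    have : 0 < n := hn
    exact_mod_cast this
  have hδ : 0 < δ := by
    apply mul_pos (div_pos (Real.sqrt_pos.2 hn') hσ) (sub_pos.2 hμ)
  have hΦα : stdPhiCDF zα = 1 - α := by linarith
  have hΦα2 : stdPhiCDF zα2 = 1 - α/2 := by linarith
  have hΦ0 : stdPhiCDF 0 = 1/2 := by
    have := stdPhiCDF_neg 0
    rw [neg_zero] at this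
    linarith
  have hz2pos : 0 < zα2 := by
    apply lt_of_stdPhiCDF_lt
    rw [hΦ0, hΦα2]; linarith
  have hzlt : zα < zα2 := by
    apply lt_of_stdPhiCDF_lt
    rw [hΦα, hΦα2]; linarith
  -- useful rewrites of shifted CDF values
  have e1 : stdPhiCDF (-zα2 - δ) = 1 - stdPhiCDF (δ + zα2) := by
    rw [show -zα2 - δ = -(δ + zα2) by ring, stdPhiCDF_neg]
  have e2 : stdPhiCDF (zα2 - δ) = 1 - stdPhiCDF (δ - zα2) := by
    rw [show zα2 - δ = -(δ - zα2) by ring, stdPhiCDF_neg]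
  have e3 : stdPhiCDF (zα - δ) = 1 - stdPhiCDF (δ - zα) := by
    rw [show zα - δ = -(δ - zα) by ring, stdPhiCDF_neg]
  have hΦnegz2 : stdPhiCDF (-zα2) = α/2 := by
    rw [stdPhiCDF_neg, hΦα2]; ring
  by_cases hcase : -zα2 ≤ zα
  · -- Case A
    have hmass : (∫ x in Iic (-zα2), stdPhi x) = ∫ x in Ioc zα zα2, stdPhi x := by
      rw [← stdPhiCDF_sub_eq hzlt.le, hΦα, hΦα2]
      show stdPhiCDF (-zα2) = _
      rw [hΦnegz2]; ring
    have hk := key hcase hzlt hδ hmass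
    rw [shift_Iic, shift_Ioc δ hzlt.le] at hk
    rw [e1, e2, e3] at hk
    linarith
  · -- Case B
    push_neg at hcase
    have hmass : (∫ x in Iic zα, stdPhi x) = ∫ x in Ioc (-zα2) zα2, stdPhi x := by
      rw [← stdPhiCDF_sub_eq (by linarith : -zα2 ≤ zα2), hΦα2, hΦnegz2]
      show stdPhiCDF zα = _
      rw [hΦα]; ring
    have hk := key hcase.le (by linarith : -zα2 < zα2) hδ hmass
    rw [shift_Iic, shift_Ioc δ (by linarith : -zα2 ≤ zα2)] at hk
    rw [e1, e2, e3] at hk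
    linarith
end

section
/- Let b < a be real numbers, let δ = a − b, and let x be real. Then ∫_{x − a}^{x − b} φ(t) dt − ∫_{x + a}^{∞} φ(t) dt = ∫_{b}^{a} ( φ(x − t) − Σ_{j=1}^{∞} φ(x + t + jδ) ) dt, where the series converges for every t. -/
open Real MeasureTheory Set

lemma stdPhi_nonneg (y : ℝ) : 0 ≤ stdPhi y :=
  mul_nonneg (inv_nonneg.2 (Real.sqrt_nonneg _)) (Real.exp_pos _).le

lemma stdPhi_continuous : Continuous stdPhi := by
  unfold stdPhi
  fun_prop

lemma stdPhi_le (y : ℝ) : stdPhi y ≤ (Real.sqrt (2 * Real.pi))⁻¹ * Real.exp (1 / 2 - y) := by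
  unfold stdPhi
  refine mul_le_mul_of_nonneg_left (Real.exp_le_exp.2 ?_) (inv_nonneg.2 (Real.sqrt_nonneg _))
  nlinarith [sq_nonneg (y - 1)]

lemma stdPhi_le_geom (c δ : ℝ) (hδ : 0 < δ) (j : ℕ) (y : ℝ) (hy : c ≤ y) :
    stdPhi (y + (j + 1) * δ)
      ≤ ((Real.sqrt (2 * Real.pi))⁻¹ * Real.exp (1 / 2 - c - δ)) * Real.exp (-δ) ^ j := by
  calc stdPhi (y + (j + 1) * δ)
      ≤ (Real.sqrt (2 * Real.pi))⁻¹ * Real.exp (1 / 2 - (y + (j + 1) * δ)) := stdPhi_le _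
    _ ≤ (Real.sqrt (2 * Real.pi))⁻¹ * Real.exp (1 / 2 - (c + (j + 1) * δ)) := by
        refine mul_le_mul_of_nonneg_left (Real.exp_le_exp.2 ?_)
          (inv_nonneg.2 (Real.sqrt_nonneg _))
        have : 0 ≤ (j + 1 : ℝ) * δ := by positivity
        linarith
    _ = ((Real.sqrt (2 * Real.pi))⁻¹ * Real.exp (1 / 2 - c - δ)) * Real.exp (-δ) ^ j := by
        rw [← Real.exp_nat_mul, mul_assoc, ← Real.exp_add]
        congr 1
        ring

lemma summable_geom_aux (δ : ℝ) (hδ : 0 < δ) (K : ℝ) :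
    Summable (fun j : ℕ => K * Real.exp (-δ) ^ j) :=
  (summable_geometric_of_lt_one (Real.exp_nonneg _)
    (Real.exp_lt_one_iff.2 (by linarith))).mul_left K

lemma summable_stdPhi (c δ : ℝ) (hδ : 0 < δ) :
    Summable (fun j : ℕ => stdPhi (c + (j + 1) * δ)) := by
  refine Summable.of_nonneg_of_le (fun j => stdPhi_nonneg _)
    (fun j => stdPhi_le_geom c δ hδ j c le_rfl) (summable_geom_aux δ hδ _)

theorem integral_identity
    (b a : ℝ) (hba : b < a) (δ : ℝ) (hδ : δ = a - b) (x : ℝ) :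
    ((∫ t in (x - a)..(x - b), stdPhi t) - ∫ t in Set.Ioi (x + a), stdPhi t)
      = (∫ t in b..a, (stdPhi (x - t) - ∑' j : ℕ, stdPhi (x + t + (j + 1) * δ)))
    ∧ ∀ t : ℝ, Summable (fun j : ℕ => stdPhi (x + t + (j + 1) * δ)) := by
  have hδpos : 0 < δ := by rw [hδ]; linarith
  have hsum : ∀ t : ℝ, Summable (fun j : ℕ => stdPhi (x + t + (j + 1) * δ)) := by
    intro t
    exact summable_stdPhi (x + t) δ hδpos
  refine ⟨?_, hsum⟩
  set g : ℕ → ℝ → ℝ := fun j t => stdPhi (x + t + (j + 1) * δ) with hg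
  have hg_cont : ∀ j, Continuous (g j) := fun j =>
    stdPhi_continuous.comp (by fun_prop)
  set K : ℝ := (Real.sqrt (2 * Real.pi))⁻¹ * Real.exp (1 / 2 - (x + b) - δ) with hK
  have hbound : ∀ (j : ℕ) (t : ℝ), t ∈ uIcc b a → ‖g j t‖ ≤ K * Real.exp (-δ) ^ j := by
    intro j t ht
    rw [uIcc_of_le hba.le] at ht
    rw [Real.norm_of_nonneg (stdPhi_nonneg _)]
    exact stdPhi_le_geom (x + b) δ hδpos j (x + t) (by linarith [ht.1])
  have hKsum : Summable (fun j : ℕ => K * Real.exp (-δ) ^ j) := summable_geom_aux δ hδpos K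
  -- continuity & integrability of the tsum
  have htsum_cont : ContinuousOn (fun t => ∑' j, g j t) (uIcc b a) :=
    continuousOn_tsum (fun j => (hg_cont j).continuousOn) hKsum hbound
  have htsum_int : IntervalIntegrable (fun t => ∑' j, g j t) volume b a :=
    htsum_cont.intervalIntegrable
  have hφsub_int : IntervalIntegrable (fun t => stdPhi (x - t)) volume b a :=
    (stdPhi_continuous.comp (by fun_prop)).intervalIntegrable _ _
  -- interchange sum and integral
  set fC : ℕ → C(ℝ, ℝ) := fun j => ⟨g j, hg_cont j⟩ with hfC
  have hnorm_sum : Summable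
      (fun j : ℕ => ‖(fC j).restrict (⟨uIcc b a, isCompact_uIcc⟩ : TopologicalSpace.Compacts ℝ)‖) := by
    refine Summable.of_nonneg_of_le (fun j => norm_nonneg _) (fun j => ?_) hKsum
    refine ContinuousMap.norm_le _ (mul_nonneg ?_ (pow_nonneg (Real.exp_nonneg _) _)) |>.2 ?_
    · exact mul_nonneg (inv_nonneg.2 (Real.sqrt_nonneg _)) (Real.exp_nonneg _)
    · rintro ⟨t, ht⟩
      exact hbound j t ht
  have hswap : ∫ t in b..a, (∑' j, g j t) = ∑' j, ∫ t in b..a, g j t :=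
    (intervalIntegral.tsum_intervalIntegral_eq_of_summable_norm hnorm_sum).symm
  -- evaluate each term of the series
  set u : ℕ → ℝ := fun n => stdPhiCDF (x + a + n * δ) with hu
  have hterm : ∀ j : ℕ, ∫ t in b..a, g j t = u (j + 1) - u j := by
    intro j
    have h1 : ∫ t in b..a, g j t = ∫ t in b..a, stdPhi ((x + (j + 1) * δ) + t) := by
      refine intervalIntegral.integral_congr fun t _ => ?_
      simp [hg]; ring_nf
    rw [h1, intervalIntegral.integral_comp_add_left stdPhi (x + (j + 1) * δ),
      ← intervalIntegral.integral_Iic_sub_Iic stdPhi_integrable.integrableOn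
        stdPhi_integrable.integrableOn]
    have e1 : x + (j + 1) * δ + a = x + a + (j + 1 : ℕ) * δ := by push_cast; ring
    have e2 : x + (j + 1) * δ + b = x + a + (j : ℕ) * δ := by rw [hδ]; ring
    rw [e1, e2]
    rfl
  -- limit of the CDF along the lattice
  set L : ℝ := ∫ t, stdPhi t with hL
  have hLtend : Filter.Tendsto u Filter.atTop (nhds L) := by
    have hcov : AECover (volume : Measure ℝ) Filter.atTop
        (fun n : ℕ => Iic (x + a + n * δ)) := by
      refine aecover_Iic ?_
      apply Filter.tendsto_atTop_add_const_left
      exact Filter.Tendsto.atTop_mul_const hδpos tendsto_natCast_atTop_atTop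
    exact hcov.integral_tendsto_of_countably_generated stdPhi_integrable
  have hterm_nonneg : ∀ j : ℕ, 0 ≤ u (j + 1) - u j := by
    intro j
    rw [← hterm j]
    exact intervalIntegral.integral_nonneg hba.le fun t _ => stdPhi_nonneg _
  have hHasSum : HasSum (fun j : ℕ => u (j + 1) - u j) (L - u 0) := by
    rw [hasSum_iff_tendsto_nat_of_nonneg hterm_nonneg]
    have : (fun n : ℕ => ∑ i ∈ Finset.range n, (u (i + 1) - u i)) = fun n => u n - u 0 := by
      funext n
      exact Finset.sum_range_sub u n
    rw [this]
    exact hLtend.sub_const (u 0)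
  -- Ioi integral
  have hIoi : ∫ t in Set.Ioi (x + a), stdPhi t = L - u 0 := by
    have h := intervalIntegral.integral_Iic_add_Ioi (b := x + a)
      stdPhi_integrable.integrableOn stdPhi_integrable.integrableOn
    have hu0 : u 0 = stdPhiCDF (x + a) := by simp [hu]
    rw [hu0]
    unfold stdPhiCDF
    linarith
  -- assemble
  rw [intervalIntegral.integral_sub hφsub_int htsum_int,
    intervalIntegral.integral_comp_sub_left stdPhi x, hswap]
  have : ∑' j, ∫ t in b..a, g j t = L - u 0 := by
    rw [tsum_congr hterm]
    exact hHasSum.tsum_eq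
  rw [this, hIoi]
end
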